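/- A maximal two-sided ideal of the incidence algebra A (a proper ideal contained in no larger proper ideal) corresponds exactly to the complement of a single minimal element of Γ; hence the maximal ideals of A are M_x = span{[uv] : (u,v) ≠ (x,x)} for x ∈ C, and x ↦ M_x is a bijection from C onto the maximal ideals of A. -/

import Mathlib

open Classical in
/-- The generator `[xy]` of the incidence algebra over `ℂ`:
the "matrix unit" supported at `(x, y)` (zero unless `x ≤ y`). -/
noncomputable def gen {C : Type*} [PartialOrder C] (x y : C) :
    IncidenceAlgebra ℂ C :=
  ⟨fun a b => if a = x ∧ b = y ∧ x ≤ y then 1 else 0, by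
    intro a b hab
    try simp only
    rw [if_neg]
    rintro ⟨rfl, rfl, hxy⟩
    exact hab hxy⟩

/-- A two-sided ideal is maximal: proper and contained in no larger proper ideal. -/
def IsMaximalIdeal {R : Type*} [NonUnitalNonAssocRing R] (I : TwoSidedIdeal R) : Prop :=
  I ≠ ⊤ ∧ ∀ J : TwoSidedIdeal R, I < J → J = ⊤

open Finset

section Aux

set_option linter.unusedSectionVars false

variable {C : Type*} [Fintype C] [PartialOrder C] [DecidableEq C] [LocallyFiniteOrder C]

open Classical in
lemma gen_apply (x y a b : C) :
    gen x y a b = if a = x ∧ b = y ∧ x ≤ y then 1 else 0 := by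
  by_cases h : a = x ∧ b = y ∧ x ≤ y
  · rw [if_pos h]; exact if_pos h
  · rw [if_neg h]; exact if_neg h

/-- Evaluation at `(a, b)` as an additive monoid hom. -/
def evalHom (a b : C) : IncidenceAlgebra ℂ C →+ ℂ where
  toFun f := f a b
  map_zero' := rfl
  map_add' _ _ := rfl

open Classical in
lemma gen_mul_apply (x : C) (f : IncidenceAlgebra ℂ C) (a b : C) :
    (gen x x * f) a b = if a = x ∧ x ≤ b then f x b else 0 := by
  rw [IncidenceAlgebra.mul_apply]
  by_cases ha : a = x
  · subst ha
    have h1 : ∀ z ∈ Icc a b, gen a a a z * f z b = if z = a then f z b else 0 := by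
      intro z _
      rw [gen_apply]
      by_cases hz : z = a <;> simp [hz]
    rw [Finset.sum_congr rfl h1, Finset.sum_ite_eq' (Icc a b) a (fun z => f z b)]
    by_cases hb : a ≤ b <;> simp [hb, Finset.mem_Icc]
  · rw [if_neg (by tauto)]
    apply Finset.sum_eq_zero
    intro z _
    rw [gen_apply, if_neg (by tauto), zero_mul]

open Classical in
lemma mul_gen_apply (x : C) (f : IncidenceAlgebra ℂ C) (a b : C) :
    (f * gen x x) a b = if b = x ∧ a ≤ x then f a x else 0 := by
  rw [IncidenceAlgebra.mul_apply]
  by_cases hb : b = x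
  · subst hb
    have h1 : ∀ z ∈ Icc a b, f a z * gen b b z b = if z = b then f a z else 0 := by
      intro z _
      rw [gen_apply]
      by_cases hz : z = b <;> simp [hz]
    rw [Finset.sum_congr rfl h1, Finset.sum_ite_eq' (Icc a b) b (fun z => f a z)]
    by_cases ha : a ≤ b <;> simp [ha, Finset.mem_Icc]
  · rw [if_neg (by tauto)]
    apply Finset.sum_eq_zero
    intro z _
    rw [gen_apply, if_neg (by tauto), mul_zero]

lemma sandwich (x : C) (f : IncidenceAlgebra ℂ C) :
    gen x x * f * gen x x = f x x • gen x x := by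
  ext a b _
  rw [mul_gen_apply, IncidenceAlgebra.constSMul_apply, gen_apply, gen_mul_apply]
  by_cases ha : a = x <;> by_cases hb : b = x <;>
    simp [ha, hb, le_refl]

lemma smul_eq_smul_one_mul (c : ℂ) (f : IncidenceAlgebra ℂ C) :
    c • f = (c • (1 : IncidenceAlgebra ℂ C)) * f := by
  ext a b hab
  rw [IncidenceAlgebra.mul_apply, IncidenceAlgebra.constSMul_apply]
  have h1 : ∀ z ∈ Icc a b, (c • (1 : IncidenceAlgebra ℂ C)) a z * f z b =
      if z = a then c * f z b else 0 := by
    intro z _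
    rw [IncidenceAlgebra.constSMul_apply, IncidenceAlgebra.one_apply]
    by_cases hz : z = a
    · subst hz; simp
    · rw [if_neg (fun h => hz h.symm), if_neg hz, smul_zero, zero_mul]
  rw [Finset.sum_congr rfl h1, Finset.sum_ite_eq' (Icc a b) a (fun z => c * f z b)]
  simp [Finset.mem_Icc, hab]

lemma tsi_smul_mem (I : TwoSidedIdeal (IncidenceAlgebra ℂ C)) (c : ℂ)
    {f : IncidenceAlgebra ℂ C} (hf : f ∈ I) : c • f ∈ I := by
  rw [smul_eq_smul_one_mul]
  exact I.mul_mem_left _ _ hf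

lemma eq_sum_gen (f : IncidenceAlgebra ℂ C) :
    f = ∑ p : C × C, f p.1 p.2 • gen p.1 p.2 := by
  ext a b hab
  change _ = evalHom a b _
  rw [map_sum (evalHom a b) (fun p : C × C => f p.1 p.2 • gen p.1 p.2) Finset.univ]
  have h1 : ∀ p : C × C, evalHom a b (f p.1 p.2 • gen p.1 p.2) =
      if p = (a, b) then f a b else 0 := by
    intro p
    show f p.1 p.2 * gen p.1 p.2 a b = _
    rw [gen_apply]
    by_cases hp : p = (a, b)
    · subst hp
      simp [hab]
    · rw [if_neg hp, if_neg, mul_zero]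
      rintro ⟨rfl, rfl, -⟩
      exact hp (by simp)
  rw [Finset.sum_congr rfl (fun p _ => h1 p),
    Finset.sum_ite_eq' Finset.univ ((a, b) : C × C) (fun _ => f a b)]
  simp

lemma one_eq_sum_gen : (1 : IncidenceAlgebra ℂ C) = ∑ u : C, gen u u := by
  ext a b hab
  change _ = evalHom a b _
  rw [map_sum (evalHom a b) (fun u : C => gen u u) Finset.univ]
  have h1 : ∀ u : C, evalHom a b (gen u u) = if u = a ∧ a = b then 1 else 0 := by
    intro u
    show gen u u a b = _
    rw [gen_apply]
    by_cases hu : u = a ∧ a = b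
    · obtain ⟨rfl, rfl⟩ := hu
      simp
    · rw [if_neg hu, if_neg]
      rintro ⟨rfl, rfl, -⟩
      exact hu ⟨rfl, rfl⟩
  rw [Finset.sum_congr rfl (fun u _ => h1 u)]
  by_cases hab' : a = b
  · subst hab'
    simp [Finset.sum_ite_eq']
  · rw [IncidenceAlgebra.one_apply, if_neg hab']
    symm
    apply Finset.sum_eq_zero
    intro u _
    rw [if_neg (by tauto)]

/-- The maximal ideal at `x`: all `f` with `f x x = 0`. -/
def Mideal (x : C) : TwoSidedIdeal (IncidenceAlgebra ℂ C) :=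
  TwoSidedIdeal.mk' {f | f x x = 0}
    (by simp [IncidenceAlgebra.zero_apply])
    (fun {f g} hf hg => by
      simp only [Set.mem_setOf_eq, IncidenceAlgebra.add_apply] at *
      rw [hf, hg, add_zero])
    (fun {f} hf => by
      simp only [Set.mem_setOf_eq, IncidenceAlgebra.neg_apply] at *
      rw [hf, neg_zero])
    (fun {f g} hg => by
      simp only [Set.mem_setOf_eq, IncidenceAlgebra.mul_apply] at *
      rw [Finset.Icc_self, Finset.sum_singleton, hg, mul_zero])
    (fun {f g} hf => by
      simp only [Set.mem_setOf_eq, IncidenceAlgebra.mul_apply] at *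
      rw [Finset.Icc_self, Finset.sum_singleton, hf, zero_mul])

lemma mem_Mideal {x : C} {f : IncidenceAlgebra ℂ C} : f ∈ Mideal x ↔ f x x = 0 :=
  TwoSidedIdeal.mem_mk' _ _ _ _ _ _ f

lemma gen_self_notMem_Mideal (x : C) : gen x x ∉ Mideal x := by
  rw [mem_Mideal, gen_apply]
  simp

lemma gen_mem_Mideal {x u v : C} (huv : (u, v) ≠ (x, x)) : gen u v ∈ Mideal x := by
  rw [mem_Mideal, gen_apply, if_neg]
  rintro ⟨rfl, rfl, -⟩
  exact huv rfl

lemma Mideal_ne_top (x : C) : Mideal x ≠ ⊤ := by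
  intro h
  exact gen_self_notMem_Mideal x (by rw [h]; exact TwoSidedIdeal.mem_top _)

/-- If `I` contains an element with nonzero `(x, x)` entry, then `gen x x ∈ I`. -/
lemma gen_self_mem_of_ne {x : C} {I : TwoSidedIdeal (IncidenceAlgebra ℂ C)}
    {f : IncidenceAlgebra ℂ C} (hf : f ∈ I) (hfx : f x x ≠ 0) : gen x x ∈ I := by
  have h1 : gen x x * f * gen x x ∈ I :=
    I.mul_mem_right _ _ (I.mul_mem_left _ _ hf)
  rw [sandwich] at h1
  have h2 : (f x x)⁻¹ • (f x x • gen x x) ∈ I := tsi_smul_mem I _ h1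
  rwa [smul_smul, inv_mul_cancel₀ hfx, one_smul] at h2

lemma top_of_all_gen_self {I : TwoSidedIdeal (IncidenceAlgebra ℂ C)}
    (h : ∀ u : C, gen u u ∈ I) : I = ⊤ := by
  apply I.eq_top
  rw [one_eq_sum_gen]
  exact sum_mem fun u _ => h u

/-- The kernel of evaluation at `(x, x)`, as a subspace. -/
noncomputable def Ksub (x : C) : Submodule ℂ (IncidenceAlgebra ℂ C) where
  carrier := {f | f x x = 0}
  zero_mem' := by simp [IncidenceAlgebra.zero_apply]
  add_mem' := fun {f g} hf hg => by
    simp only [Set.mem_setOf_eq, IncidenceAlgebra.add_apply] at *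
    rw [hf, hg, add_zero]
  smul_mem' := fun c f hf => by
    simp only [Set.mem_setOf_eq, IncidenceAlgebra.constSMul_apply] at *
    rw [hf, smul_zero]

/-- The span description of `Mideal x`. -/
lemma Mideal_coe_eq_span (x : C) :
    ((Mideal x : TwoSidedIdeal (IncidenceAlgebra ℂ C)) :
        Set (IncidenceAlgebra ℂ C)) =
      (Submodule.span ℂ {f : IncidenceAlgebra ℂ C |
        ∃ u v : C, u ≤ v ∧ (u, v) ≠ (x, x) ∧ f = gen u v} :
        Set (IncidenceAlgebra ℂ C)) := by
  apply Set.eq_of_subset_of_subset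
  · intro f hf
    rw [SetLike.mem_coe] at hf ⊢
    rw [mem_Mideal] at hf
    rw [eq_sum_gen f]
    apply sum_mem
    intro p _
    by_cases hle : p.1 ≤ p.2
    · by_cases hp : (p.1, p.2) = (x, x)
      · have hx1 : p.1 = x := congrArg Prod.fst hp
        have hx2 : p.2 = x := congrArg Prod.snd hp
        rw [hx1, hx2, hf, zero_smul]
        exact Submodule.zero_mem _
      · exact Submodule.smul_mem _ _
          (Submodule.subset_span ⟨p.1, p.2, hle, hp, rfl⟩)
    · have h0 : f p.1 p.2 = 0 := IncidenceAlgebra.apply_eq_zero_of_not_le hle f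
      rw [h0, zero_smul]
      exact Submodule.zero_mem _
  · intro f hf
    rw [SetLike.mem_coe] at hf
    have hsub : {f : IncidenceAlgebra ℂ C |
        ∃ u v : C, u ≤ v ∧ (u, v) ≠ (x, x) ∧ f = gen u v} ⊆ (Ksub x : Set _) := by
      rintro g ⟨u, v, hle, hne, rfl⟩
      show gen u v x x = 0
      have hm := gen_mem_Mideal (x := x) hne
      rwa [mem_Mideal] at hm
    have h2 : f ∈ Ksub x := Submodule.span_le.2 hsub hf
    rw [SetLike.mem_coe, mem_Mideal]
    exact h2

lemma Mideal_injective : Function.Injective (Mideal (C := C)) := by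
  intro x y hxy
  by_contra hne
  have h1 : gen x x ∈ Mideal y := gen_mem_Mideal (by simpa [Prod.ext_iff] using hne)
  rw [← hxy] at h1
  exact gen_self_notMem_Mideal x h1

lemma Mideal_isMaximal (x : C) : IsMaximalIdeal (Mideal x) := by
  refine ⟨Mideal_ne_top x, fun J hJ => ?_⟩
  rw [TwoSidedIdeal.lt_iff] at hJ
  obtain ⟨f, hfJ, hfM⟩ := Set.exists_of_ssubset hJ
  rw [SetLike.mem_coe] at hfJ
  rw [SetLike.mem_coe, mem_Mideal] at hfM
  apply top_of_all_gen_self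
  intro u
  by_cases hu : u = x
  · subst hu
    exact gen_self_mem_of_ne hfJ hfM
  · exact hJ.1 (gen_mem_Mideal (by simp [Prod.ext_iff, hu]))

lemma maximal_eq_Mideal (I : TwoSidedIdeal (IncidenceAlgebra ℂ C))
    (hI : IsMaximalIdeal I) : ∃ x : C, I = Mideal x := by
  have hle : ∃ x : C, I ≤ Mideal x := by
    by_contra h
    push_neg at h
    have hgen : ∀ x : C, gen x x ∈ I := by
      intro x
      have h' := h x
      rw [TwoSidedIdeal.le_iff, Set.not_subset] at h'
      obtain ⟨f, hfI, hfM⟩ := h'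
      rw [SetLike.mem_coe] at hfI
      rw [SetLike.mem_coe, mem_Mideal] at hfM
      exact gen_self_mem_of_ne hfI hfM
    exact hI.1 (top_of_all_gen_self hgen)
  obtain ⟨x, hx⟩ := hle
  refine ⟨x, ?_⟩
  rcases eq_or_lt_of_le hx with h | h
  · exact h
  · exact absurd (hI.2 _ h) (Mideal_ne_top x)

end Aux

/-- The maximal two-sided ideals of the incidence algebra are exactly the spans
`M_x = span {[uv] : (u,v) ≠ (x,x)}`, and `x ↦ M_x` is a bijection from `C` onto the
maximal ideals. -/
theorem maximal_ideals_are_diagonal_complements {C : Type*} [Fintype C] [PartialOrder C] [DecidableEq C] [LocallyFiniteOrder C] :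
    ∃ M : C → TwoSidedIdeal (IncidenceAlgebra ℂ C),
      (∀ x : C, ((M x : TwoSidedIdeal (IncidenceAlgebra ℂ C)) :
          Set (IncidenceAlgebra ℂ C)) =
        (Submodule.span ℂ {f : IncidenceAlgebra ℂ C |
          ∃ u v : C, u ≤ v ∧ (u, v) ≠ (x, x) ∧ f = gen u v} :
          Set (IncidenceAlgebra ℂ C))) ∧
      Function.Injective M ∧
      (∀ x : C, IsMaximalIdeal (M x)) ∧
      (∀ I : TwoSidedIdeal (IncidenceAlgebra ℂ C), IsMaximalIdeal I →
        ∃ x : C, I = M x) := by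
  exact ⟨Mideal, Mideal_coe_eq_span, Mideal_injective, Mideal_isMaximal, maximal_eq_Mideal⟩
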